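/- Let p ≥ 5 be prime, ℓ a positive integer, and r with 0 < r < p such that 24r+1 is a quadratic nonresidue mod p. Then every coefficient of q^{pn+r} (for n ≥ 0) in the formal power series (q;q)_∞ / (q^{pℓ};q^{pℓ})_∞ over ℤ is zero. -/

import Mathlib

/-- `(q^m; q^m)_∞ = ∏_{i ≥ 1} (1 - q^{m i})` as a formal power series over ℤ,
defined coefficientwise via the (stabilizing) partial products: for `m ≥ 1`,
the coefficient of `q^n` in `∏_{i=1}^{N} (1 - q^{m i})` is independent of `N`
once `N ≥ n`. -/
noncomputable def pochSelf (m : ℕ) : PowerSeries ℤ :=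
  PowerSeries.mk fun n => PowerSeries.coeff (R := ℤ) n
    (∏ i ∈ Finset.range (n + 1), (1 - (PowerSeries.X : PowerSeries ℤ) ^ (m * (i + 1))))

/-!
By Euler's pentagonal number theorem, `(q;q)_∞` is supported on the generalized pentagonal
numbers `a = k(3k-1)/2`, for which `24a + 1 = (6k-1)^2`, while `1/(q^{pℓ};q^{pℓ})_∞` is a power
series in `q^{pℓ}`. Hence a nonzero term of the coefficient of `q^{pn+r}` in the product comes
from some `a ≡ r (mod p)`, which would make `24r + 1` a square mod `p`.
-/

open Finset PowerSeries

namespace PowerSeries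

variable {R : Type*}

section Ring

variable [Ring R]

variable (R) in
def subringInXPow (m : ℕ) : Subring R⟦X⟧ where
  carrier := {φ | ∀ j, ¬ m ∣ j → coeff j φ = 0}
  mul_mem' {φ ψ} hφ hψ j hj := by
    rw [coeff_mul]
    refine sum_eq_zero fun ⟨a, b⟩ hab => ?_
    rw [HasAntidiagonal.mem_antidiagonal] at hab
    by_cases ha : m ∣ a
    · have hb : ¬ m ∣ b := fun hb => hj (hab ▸ dvd_add ha hb)
      rw [hψ b hb, mul_zero]
    · rw [hφ a ha, zero_mul]
  one_mem' j hj := by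
    rw [coeff_one, if_neg (by rintro rfl; exact hj (dvd_zero m))]
  add_mem' {φ ψ} hφ hψ j hj := by
    rw [map_add, hφ j hj, hψ j hj, add_zero]
  zero_mem' j _ := by
    rw [map_zero]
  neg_mem' {φ} hφ j hj := by
    rw [map_neg, hφ j hj, neg_zero]

theorem X_pow_mem_subringInXPow (m : ℕ) : (X : R⟦X⟧) ^ m ∈ subringInXPow R m := by
  intro j hj
  rw [coeff_X_pow, if_neg (by rintro rfl; exact hj dvd_rfl)]

theorem invOfUnit_mem_subringInXPow {m : ℕ} {φ : R⟦X⟧} (hφ : φ ∈ subringInXPow R m)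
    (u : Rˣ) : invOfUnit φ u ∈ subringInXPow R m := by
  intro j hj
  induction j using Nat.strong_induction_on with
  | _ j ih =>
    rw [coeff_invOfUnit, if_neg (by rintro rfl; exact hj (dvd_zero m))]
    refine mul_eq_zero_of_right _ (sum_eq_zero fun ⟨a, b⟩ hab => ?_)
    rw [HasAntidiagonal.mem_antidiagonal] at hab
    split_ifs with hb
    · by_cases ha : m ∣ a
      · rw [ih b hb fun hmb => hj (hab ▸ dvd_add ha hmb), mul_zero]
      · rw [hφ a ha, zero_mul]
    · rfl

end Ring

section CommRing

variable [CommRing R]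

theorem coeff_mul_of_X_pow_dvd_sub_one {φ ψ : R⟦X⟧} {n : ℕ} (h : X ^ (n + 1) ∣ ψ - 1) :
    coeff n (φ * ψ) = coeff n φ := by
  have h' : coeff n (φ * (ψ - 1)) = 0 :=
    X_pow_dvd_iff.mp (dvd_mul_of_dvd_right h φ) n n.lt_succ_self
  rwa [mul_sub_one, map_sub, sub_eq_zero] at h'

theorem X_pow_dvd_prod_one_sub_X_pow_sub_one {s : Finset ℕ} {n : ℕ} (hs : ∀ i ∈ s, n ≤ i) :
    (X : R⟦X⟧) ^ (n + 1) ∣ ∏ i ∈ s, (1 - X ^ (i + 1)) - 1 := by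
  refine prod_induction _ (fun ψ => X ^ (n + 1) ∣ ψ - 1) (fun φ ψ hφ hψ => ?_) (by simp)
    fun i hi => ?_
  · rw [show φ * ψ - 1 = φ * (ψ - 1) + (φ - 1) by ring]
    exact dvd_add (dvd_mul_of_dvd_right hψ φ) hφ
  · rw [sub_sub_cancel_left, dvd_neg]
    exact pow_dvd_pow X (Nat.succ_le_succ (hs i hi))

end CommRing

end PowerSeries

theorem pochSelf_mem_subringInXPow (m : ℕ) : pochSelf m ∈ subringInXPow ℤ m := by
  have hprod (n : ℕ) : ∏ i ∈ range (n + 1), (1 - X ^ (m * (i + 1))) ∈ subringInXPow ℤ m :=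
    prod_mem fun i _ => sub_mem (one_mem _) <| by
      rw [pow_mul]
      exact pow_mem (X_pow_mem_subringInXPow m) _
  intro j hj
  rw [pochSelf, coeff_mk]
  exact hprod j j hj

theorem pochSelf_one_eq_pentagonalSeries : pochSelf 1 = pentagonalSeries ℤ := by
  ext n
  obtain ⟨s₀, hs₀⟩ := Filter.eventually_atTop.mp (coeff_prod_one_sub_X_pow_eventually_eq ℤ n)
  set s := s₀ ∪ range (n + 1)
  have hsplit := prod_sdiff (f := fun i => (1 - X ^ (i + 1) : ℤ⟦X⟧))
    (subset_union_right : range (n + 1) ⊆ s)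
  have htail : X ^ (n + 1) ∣ ∏ i ∈ s \ range (n + 1), (1 - X ^ (i + 1) : ℤ⟦X⟧) - 1 :=
    X_pow_dvd_prod_one_sub_X_pow_sub_one fun i hi => by
      have := (mem_sdiff.mp hi).2
      rw [mem_range] at this
      omega
  rw [← hs₀ s subset_union_left, ← hsplit, mul_comm, coeff_mul_of_X_pow_dvd_sub_one htail,
    pochSelf, coeff_mk]
  simp only [one_mul]

theorem isSquare_twentyFour_mul_pentagonal_add_one (k : ℤ) :
    IsSquare (24 * (pentagonal k : ℤ) + 1) :=
  ⟨6 * k - 1, by linear_combination 12 * two_mul_natCast_pentagonal k⟩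

theorem isSquare_of_coeff_pochSelf_one_ne_zero {a : ℕ} (h : coeff a (pochSelf 1) ≠ 0) :
    IsSquare (24 * (a : ℤ) + 1) := by
  rw [pochSelf_one_eq_pentagonalSeries] at h
  obtain ⟨k, rfl⟩ : a ∈ Set.range pentagonal := by
    by_contra ha
    exact h (coeff_pentagonalSeries_eq_zero ℤ ha)
  exact isSquare_twentyFour_mul_pentagonal_add_one k

theorem coeff_eta_div_vanishes_general (p : ℕ) (l : ℕ) (r : ℕ)
    (hqnr : ¬ IsSquare ((24 * r + 1 : ℕ) : ZMod p)) (n : ℕ) :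
    PowerSeries.coeff (R := ℤ) (p * n + r)
      (pochSelf 1 * PowerSeries.invOfUnit (pochSelf (p * l)) 1) = 0 := by
  rw [coeff_mul]
  refine sum_eq_zero fun ⟨a, b⟩ hab => ?_
  rw [HasAntidiagonal.mem_antidiagonal] at hab
  by_cases hb : p * l ∣ b
  · suffices coeff a (pochSelf 1) = 0 by rw [this, zero_mul]
    by_contra ha
    obtain ⟨t, rfl⟩ := hb
    have hcongr : (a : ZMod p) = r := by
      simpa using congrArg (Nat.cast : ℕ → ZMod p) hab
    apply hqnr
    simpa [hcongr] using (isSquare_of_coeff_pochSelf_one_ne_zero ha).map (Int.castRingHom (ZMod p))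
  · rw [invOfUnit_mem_subringInXPow (pochSelf_mem_subringInXPow _) 1 b hb, mul_zero]

/-- Every coefficient of `q^{pn+r}` in `(q;q)_∞ / (q^{pℓ};q^{pℓ})_∞` vanishes,
when `24r+1` is a quadratic nonresidue mod the prime `p ≥ 5` and `0 < r < p`. -/
theorem coeff_eta_div_vanishes (p : ℕ) (hp : p.Prime) (hp5 : 5 ≤ p)
    (l : ℕ) (hl : 0 < l) (r : ℕ) (hr0 : 0 < r) (hrp : r < p)
    (hqnr : ¬ IsSquare ((24 * r + 1 : ℕ) : ZMod p)) (n : ℕ) :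
    PowerSeries.coeff (R := ℤ) (p * n + r)
      (pochSelf 1 * PowerSeries.invOfUnit (pochSelf (p * l)) 1) = 0 :=
  coeff_eta_div_vanishes_general p l r hqnr n
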